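/- Property of rational diameters: the set of pairs of positive integers (a, d) such that d² = 2·a² + 1 or d² + 1 = 2·a² is infinite. -/
import Mathlib

private def pellSeq : ℕ → ℕ × ℕ
  | 0 => (1, 1)
  | n + 1 => ((pellSeq n).1 + (pellSeq n).2, 2 * (pellSeq n).1 + (pellSeq n).2)

private lemma pellSeq_mem (n : ℕ) :
    0 < (pellSeq n).1 ∧ 0 < (pellSeq n).2 ∧
      ((pellSeq n).2 ^ 2 = 2 * (pellSeq n).1 ^ 2 + 1 ∨
        (pellSeq n).2 ^ 2 + 1 = 2 * (pellSeq n).1 ^ 2) := by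
  induction n with
  | zero => simp [pellSeq]
  | succ n ih =>
    obtain ⟨ha, hd, h⟩ := ih
    refine ⟨by simp [pellSeq]; omega, by simp [pellSeq]; omega, ?_⟩
    rcases h with h | h
    · right; simp only [pellSeq]; nlinarith [h]
    · left; simp only [pellSeq]; nlinarith [h]

private lemma pellSeq_mono : StrictMono (fun n => (pellSeq n).1) := by
  apply strictMono_nat_of_lt_succ
  intro n
  have := (pellSeq_mem n).2.1
  simp [pellSeq]; omega

theorem rational_diameters_infinite :
    {p : ℕ × ℕ | 0 < p.1 ∧ 0 < p.2 ∧
      (p.2 ^ 2 = 2 * p.1 ^ 2 + 1 ∨ p.2 ^ 2 + 1 = 2 * p.1 ^ 2)}.Infinite := by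
  apply Set.infinite_of_injective_forall_mem (f := pellSeq)
  · intro m n h
    exact pellSeq_mono.injective (by rw [h])
  · exact pellSeq_mem
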